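/- Let n ≥ 1 be a natural number and let φ : (0,∞) → (0,∞) be nondecreasing and satisfy a·λ^β·φ(t) ≤ φ(λ·t) for all λ ≥ 1 and t ≥ 1, where a > 0 and β ∈ (0,2). Then for every point v in Euclidean space ℝⁿ and every ρ ∈ (0,1], the Lebesgue integral over the open ball B(v,ρ) of the function y ↦ 1/( φ(|v−y|⁻²)·|v−y|ⁿ ) is at most (n·ωₙ)/(2·a·β) · 1/φ(ρ⁻²), where ωₙ denotes the Lebesgue volume of the unit ball in ℝⁿ. -/

import Mathlib

open MeasureTheory Set Metric
open scoped ENNReal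

/-!
The lower scaling condition gives `φ(|x|⁻²) ≥ a (ρ/|x|)^(2β) φ(ρ⁻²)` on `B(0, ρ)`, so the
integrand is dominated by `|x|^(2β - n) / (a ρ^(2β) φ(ρ⁻²))`. In polar coordinates the integral
of `|x|^(2β - n)` over `B(0, ρ)` is `n ωₙ ∫₀^ρ r^(2β - 1) dr = n ωₙ ρ^(2β) / (2β)`.
-/

theorem lintegral_Ioo_rpow_sub_one {γ : ℝ} (hγ : 0 < γ) {ρ : ℝ} (hρ : 0 ≤ ρ) :
    ∫⁻ r in Ioo 0 ρ, ENNReal.ofReal (r ^ (γ - 1)) = ENNReal.ofReal (ρ ^ γ / γ) := by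
  have hγ' : (-1 : ℝ) < γ - 1 := by linarith
  rw [← ofReal_integral_eq_lintegral_ofReal, ← integral_Ioc_eq_integral_Ioo,
    ← intervalIntegral.integral_of_le hρ, integral_rpow (Or.inl hγ'), sub_add_cancel,
    Real.zero_rpow hγ.ne', sub_zero]
  · exact ((intervalIntegral.intervalIntegrable_rpow' hγ').1).mono_set Ioo_subset_Ioc_self
  · filter_upwards [ae_restrict_mem measurableSet_Ioo] with r hr
    exact Real.rpow_nonneg hr.1.le _

namespace MeasureTheory

section

variable {E : Type*} [NormedAddCommGroup E] [NormedSpace ℝ E] [MeasurableSpace E] [BorelSpace E]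
  [FiniteDimensional ℝ E] (μ : Measure E) [μ.IsAddHaarMeasure]

local notation "dim" => Module.finrank ℝ

theorem lintegral_fun_norm_addHaar [Nontrivial E] {f : ℝ → ℝ≥0∞} (hf : Measurable f) :
    ∫⁻ x, f ‖x‖ ∂μ = dim E * μ (ball 0 1) *
      ∫⁻ r in Ioi (0 : ℝ), ENNReal.ofReal (r ^ (dim E - 1)) * f r := by
  have hmeas : Measurable fun p : sphere (0 : E) 1 × Ioi (0 : ℝ) => f p.2 :=
    hf.comp (measurable_subtype_coe.comp measurable_snd)
  calc
    ∫⁻ x, f ‖x‖ ∂μ = ∫⁻ x in {(0 : E)}ᶜ, f ‖x‖ ∂μ := by rw [restrict_compl_singleton]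
    _ = ∫⁻ x : ({(0 : E)}ᶜ : Set E), f ‖x.1‖ ∂(μ.comap (↑)) :=
      (lintegral_subtype_comap (measurableSet_singleton (0 : E)).compl fun x => f ‖x‖).symm
    _ = ∫⁻ x : ({(0 : E)}ᶜ : Set E), f (homeomorphUnitSphereProd E x).2 ∂(μ.comap (↑)) :=
      lintegral_congr (by simp)
    _ = ∫⁻ p : sphere (0 : E) 1 × Ioi (0 : ℝ), f p.2
          ∂(μ.toSphere.prod (Measure.volumeIoiPow (dim E - 1))) :=
      μ.measurePreserving_homeomorphUnitSphereProd.lintegral_comp hmeas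
    _ = μ.toSphere univ *
          ∫⁻ r : Ioi (0 : ℝ), f r ∂(Measure.volumeIoiPow (dim E - 1)) := by
      rw [lintegral_prod _ hmeas.aemeasurable]
      simp [lintegral_const, mul_comm]
    _ = _ := by
      rw [μ.toSphere_apply_univ]
      congr 1
      have hg : Measurable fun r : Ioi (0 : ℝ) => f r := hf.comp measurable_subtype_coe
      rw [Measure.volumeIoiPow, lintegral_withDensity_eq_lintegral_mul _
        (measurable_subtype_coe.pow_const _).ennreal_ofReal hg,
        ← lintegral_subtype_comap measurableSet_Ioi
          (fun r : ℝ => ENNReal.ofReal (r ^ (dim E - 1)) * f r)]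
      rfl

theorem setLIntegral_ball_fun_norm_addHaar [Nontrivial E] {f : ℝ → ℝ≥0∞} (hf : Measurable f)
    (ρ : ℝ) :
    ∫⁻ x in ball 0 ρ, f ‖x‖ ∂μ = dim E * μ (ball 0 1) *
      ∫⁻ r in Ioo 0 ρ, ENNReal.ofReal (r ^ (dim E - 1)) * f r := by
  have hind :
      (ball (0 : E) ρ).indicator (fun x => f ‖x‖) = fun x => (Iio ρ).indicator f ‖x‖ := by
    ext x
    simp only [indicator, mem_ball_zero_iff, mem_Iio]
  rw [← lintegral_indicator measurableSet_ball, hind,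
    lintegral_fun_norm_addHaar μ (hf.indicator measurableSet_Iio), ← Ioi_inter_Iio, inter_comm]
  simp only [← setLIntegral_indicator measurableSet_Iio, indicator_mul_right]

theorem setLIntegral_ball_rpow_norm [Nontrivial E] {γ : ℝ} (hγ : 0 < γ) {ρ : ℝ} (hρ : 0 ≤ ρ) :
    ∫⁻ x in ball 0 ρ, ENNReal.ofReal (‖x‖ ^ (γ - dim E)) ∂μ =
      dim E * μ (ball 0 1) * ENNReal.ofReal (ρ ^ γ / γ) := by
  have hradial : ∀ r ∈ Ioo 0 ρ, ENNReal.ofReal (r ^ (dim E - 1)) *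
      ENNReal.ofReal (r ^ (γ - dim E)) = ENNReal.ofReal (r ^ (γ - 1)) := by
    rintro r ⟨hr, -⟩
    rw [← ENNReal.ofReal_mul (by positivity), ← Real.rpow_natCast, ← Real.rpow_add hr,
      Nat.cast_sub Module.finrank_pos, Nat.cast_one, sub_add_sub_cancel']
  rw [setLIntegral_ball_fun_norm_addHaar μ
      (f := fun r => ENNReal.ofReal (r ^ (γ - dim E))) (by fun_prop),
    setLIntegral_congr_fun measurableSet_Ioo hradial, lintegral_Ioo_rpow_sub_one hγ hρ]

end

section

variable {E : Type*} [NormedAddCommGroup E] [MeasurableSpace E] [BorelSpace E]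
  (μ : Measure E) [μ.IsAddLeftInvariant]

theorem setLIntegral_ball_fun_dist (f : ℝ → ℝ≥0∞) (v : E) (ρ : ℝ) :
    ∫⁻ y in ball v ρ, f (dist v y) ∂μ = ∫⁻ x in ball 0 ρ, f ‖x‖ ∂μ := by
  have hpre : (fun x => v + x) ⁻¹' ball v ρ = ball (0 : E) ρ := by
    ext x
    simp
  rw [← (measurePreserving_add_left μ v).setLIntegral_comp_preimage_emb
    (measurableEmbedding_addLeft v), hpre]
  simp only [dist_self_add_right]

end

end MeasureTheory

def LowerScaling (φ : ℝ → ℝ) (a β : ℝ) : Prop :=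
  ∀ lam t : ℝ, 1 ≤ lam → 1 ≤ t → a * lam ^ β * φ t ≤ φ (lam * t)

namespace LowerScaling

variable {φ : ℝ → ℝ} {a β r ρ : ℝ}

theorem mul_div_rpow_mul_le (h : LowerScaling φ a β) (hr : 0 < r) (hrρ : r ≤ ρ) (hρ : ρ ≤ 1) :
    a * (ρ / r) ^ (2 * β) * φ (ρ ^ 2)⁻¹ ≤ φ (r ^ 2)⁻¹ := by
  have hρ0 : 0 < ρ := hr.trans_le hrρ
  have hlam : 1 ≤ (ρ / r) ^ 2 := one_le_pow₀ ((one_le_div hr).2 hrρ)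
  have ht : 1 ≤ (ρ ^ 2)⁻¹ := (one_le_inv₀ (by positivity)).2 (pow_le_one₀ hρ0.le hρ)
  have hprod : (ρ / r) ^ 2 * (ρ ^ 2)⁻¹ = (r ^ 2)⁻¹ := by field_simp
  have := h _ _ hlam ht
  rwa [hprod, ← Real.rpow_natCast, ← Real.rpow_mul (div_pos hρ0 hr).le, Nat.cast_ofNat]
    at this

theorem one_div_mul_pow_le (h : LowerScaling φ a β) (ha : 0 < a) (hφρ : 0 < φ (ρ ^ 2)⁻¹)
    (hr : 0 ≤ r) (hrρ : r ≤ ρ) (hρ : ρ ≤ 1) {n : ℕ} (hn : n ≠ 0) :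
    1 / (φ (r ^ 2)⁻¹ * r ^ n) ≤ (a * ρ ^ (2 * β) * φ (ρ ^ 2)⁻¹)⁻¹ * r ^ (2 * β - n) := by
  rcases hr.eq_or_lt with rfl | hr
  · rw [zero_pow hn, mul_zero, div_zero]
    exact mul_nonneg (by positivity) (Real.rpow_nonneg le_rfl _)
  have hρ0 : 0 < ρ := hr.trans_le hrρ
  have hr2β : 0 < r ^ (2 * β) := Real.rpow_pos_of_pos hr _
  have hmul : a * ρ ^ (2 * β) * φ (ρ ^ 2)⁻¹ ≤ φ (r ^ 2)⁻¹ * r ^ (2 * β) :=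
    calc a * ρ ^ (2 * β) * φ (ρ ^ 2)⁻¹
        = a * (ρ / r) ^ (2 * β) * φ (ρ ^ 2)⁻¹ * r ^ (2 * β) := by
          rw [Real.div_rpow hρ0.le hr.le]
          field_simp
      _ ≤ φ (r ^ 2)⁻¹ * r ^ (2 * β) := by gcongr; exact h.mul_div_rpow_mul_le hr hrρ hρ
  have hA : 0 < a * ρ ^ (2 * β) * φ (ρ ^ 2)⁻¹ := by positivity
  have hφr : 0 < φ (r ^ 2)⁻¹ := pos_of_mul_pos_left (hA.trans_le hmul) (by positivity)
  rw [Real.rpow_sub hr, Real.rpow_natCast, ← mul_div_assoc, inv_mul_eq_div, div_div,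
    div_le_div_iff₀ (by positivity) (by positivity)]
  nlinarith [pow_pos hr n]

end LowerScaling

theorem ball_integral_inv_phi_bound_general (n : ℕ) (hn : 1 ≤ n) (φ : ℝ → ℝ) (a β : ℝ)
    (hpos : ∀ t : ℝ, 0 < t → 0 < φ t)
    (ha : 0 < a) (hβ : β ∈ Set.Ioo (0 : ℝ) 2)
    (hscal : ∀ lam t : ℝ, 1 ≤ lam → 1 ≤ t → a * lam ^ β * φ t ≤ φ (lam * t)) :
    ∀ (v : EuclideanSpace ℝ (Fin n)) (ρ : ℝ), ρ ∈ Set.Ioc (0 : ℝ) 1 →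
      (∫⁻ y in Metric.ball v ρ,
          ENNReal.ofReal (1 / (φ ((dist v y ^ 2)⁻¹) * dist v y ^ n))) ≤
        ENNReal.ofReal
          ((n * (volume (Metric.ball (0 : EuclideanSpace ℝ (Fin n)) 1)).toReal) /
              (2 * a * β) * (1 / φ ((ρ ^ 2)⁻¹))) := by
  rintro v ρ ⟨hρ0, hρ1⟩
  have : Nonempty (Fin n) := ⟨⟨0, hn⟩⟩
  have hφρ : 0 < φ (ρ ^ 2)⁻¹ := hpos _ (by positivity)
  set c := (a * ρ ^ (2 * β) * φ (ρ ^ 2)⁻¹)⁻¹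
  set V := volume (ball (0 : EuclideanSpace ℝ (Fin n)) 1)
  have hmaj : ∀ x ∈ ball (0 : EuclideanSpace ℝ (Fin n)) ρ,
      ENNReal.ofReal (1 / (φ (‖x‖ ^ 2)⁻¹ * ‖x‖ ^ n)) ≤
        ENNReal.ofReal c * ENNReal.ofReal (‖x‖ ^ (2 * β - n)) := fun x hx => by
    rw [← ENNReal.ofReal_mul (by positivity)]
    exact ENNReal.ofReal_le_ofReal <| LowerScaling.one_div_mul_pow_le (φ := φ) hscal ha hφρ
      (norm_nonneg x) (mem_ball_zero_iff.1 hx).le hρ1 (by omega)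
  calc ∫⁻ y in ball v ρ, ENNReal.ofReal (1 / (φ (dist v y ^ 2)⁻¹ * dist v y ^ n))
      = ∫⁻ x in ball 0 ρ, ENNReal.ofReal (1 / (φ (‖x‖ ^ 2)⁻¹ * ‖x‖ ^ n)) :=
        setLIntegral_ball_fun_dist volume
          (fun d => ENNReal.ofReal (1 / (φ (d ^ 2)⁻¹ * d ^ n))) v ρ
    _ ≤ ∫⁻ x in ball 0 ρ, ENNReal.ofReal c * ENNReal.ofReal (‖x‖ ^ (2 * β - n)) :=
        setLIntegral_mono' measurableSet_ball hmaj
    _ = ENNReal.ofReal c * (n * V * ENNReal.ofReal (ρ ^ (2 * β) / (2 * β))) := by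
        have hball := setLIntegral_ball_rpow_norm (volume : Measure (EuclideanSpace ℝ (Fin n)))
          (by linarith [hβ.1] : 0 < 2 * β) hρ0.le
        rw [finrank_euclideanSpace_fin] at hball
        rw [lintegral_const_mul' _ _ ENNReal.ofReal_ne_top, hball]
    _ = _ := by
        have hV : V ≠ ⊤ := measure_ball_lt_top.ne
        conv_lhs => rw [← ENNReal.ofReal_natCast n, ← ENNReal.ofReal_toReal hV]
        rw [← ENNReal.ofReal_mul (by positivity), ← ENNReal.ofReal_mul (by positivity),
          ← ENNReal.ofReal_mul (by positivity)]
        congr 1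
        simp only [c]
        field_simp

/-- Polar-coordinate estimate: `∫_{B(v,ρ)} (φ(|v−y|⁻²)|v−y|ⁿ)⁻¹ dy ≤ (n ωₙ)/(2aβ) · φ(ρ⁻²)⁻¹`
under the lower scaling condition (H1). -/
theorem ball_integral_inv_phi_bound (n : ℕ) (hn : 1 ≤ n) (φ : ℝ → ℝ) (a β : ℝ)
    (hpos : ∀ t : ℝ, 0 < t → 0 < φ t)
    (hmono : MonotoneOn φ (Set.Ioi (0 : ℝ)))
    (ha : 0 < a) (hβ : β ∈ Set.Ioo (0 : ℝ) 2)
    (hscal : ∀ lam t : ℝ, 1 ≤ lam → 1 ≤ t → a * lam ^ β * φ t ≤ φ (lam * t)) :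
    ∀ (v : EuclideanSpace ℝ (Fin n)) (ρ : ℝ), ρ ∈ Set.Ioc (0 : ℝ) 1 →
      (∫⁻ y in Metric.ball v ρ,
          ENNReal.ofReal (1 / (φ ((dist v y ^ 2)⁻¹) * dist v y ^ n))) ≤
        ENNReal.ofReal
          ((n * (volume (Metric.ball (0 : EuclideanSpace ℝ (Fin n)) 1)).toReal) /
              (2 * a * β) * (1 / φ ((ρ ^ 2)⁻¹))) :=
  ball_integral_inv_phi_bound_general n hn φ a β hpos ha hβ hscal
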